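/- arXiv:1112.2537 — 3 statements merged into one kernel-verified Lean document; each statement's English description precedes it below -/
import Mathlib

section
/- Let τ be a stopping time on a filtered probability space. Define A_τ^t = {A ∈ A(F_t) : A ⊆ {τ = t}} for t ∈ T ∪ {+∞} and A_τ = ⋃_{t ∈ T∪{+∞}} A_τ^t. Then every element of A_τ is an atom of the stopping time σ-algebra F_τ, i.e., A_τ ⊆ A(F_τ). -/
open Set MeasurableSpace MeasureTheory

/-- `A` is an atom (minimal nonempty element) of the σ-algebra `m`. -/
def IsAtomOf {Ω : Type*} (m : MeasurableSpace Ω) (A : Set Ω) : Prop :=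
  MeasurableSet[m] A ∧ A ≠ ∅ ∧
    ∀ F : Set Ω, MeasurableSet[m] F → F ⊆ A → F = ∅ ∨ F = A

/-- The stopping time σ-algebra `F_τ` as a collection of sets:
`{F ∈ F_∞ : F ∩ {τ ≤ t} ∈ F_t for all t ∈ T}`, where `F_∞ = 𝓕 ⊤`. -/
def stoppedSets {Ω : Type*} (T : Set ℝ) (𝓕 : WithTop ℝ → MeasurableSpace Ω)
    (τ : Ω → WithTop ℝ) : Set (Set Ω) :=
  {F | MeasurableSet[𝓕 ⊤] F ∧
    ∀ t ∈ T, MeasurableSet[𝓕 (t : WithTop ℝ)] (F ∩ {ω | τ ω ≤ (t : WithTop ℝ)})}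

/-- every element of the collection A_tau is an atom of F_tau. -/
theorem Atau_subset_atoms_stoppedSets {Ω : Type*} (T : Set ℝ)
    (𝓕 : WithTop ℝ → MeasurableSpace Ω) (τ : Ω → WithTop ℝ)
    (hmono : ∀ s ∈ T, ∀ t ∈ T, s ≤ t → 𝓕 s ≤ 𝓕 t)
    (hsub : ∀ t ∈ T, 𝓕 (t : WithTop ℝ) ≤ 𝓕 ⊤)
    (hrange : ∀ ω, τ ω = ⊤ ∨ ∃ t ∈ T, τ ω = (t : WithTop ℝ))
    (hstop : ∀ t ∈ T, MeasurableSet[𝓕 (t : WithTop ℝ)] {ω | τ ω ≤ (t : WithTop ℝ)}) :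
    ∀ A ∈ {A : Set Ω | ∃ s : WithTop ℝ, (s = ⊤ ∨ ∃ r ∈ T, s = (r : WithTop ℝ)) ∧
        IsAtomOf (𝓕 s) A ∧ A ⊆ {ω | τ ω = s}},
      A ∈ stoppedSets T 𝓕 τ ∧ A ≠ ∅ ∧
        ∀ F ∈ stoppedSets T 𝓕 τ, F ⊆ A → F = ∅ ∨ F = A := by
  rintro A ⟨s, hs, ⟨hAmeas, hAne, hAatom⟩, hAsub⟩
  have hAtop : MeasurableSet[𝓕 ⊤] A := by
    rcases hs with rfl | ⟨r, hr, rfl⟩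
    · exact hAmeas
    · exact hsub r hr _ hAmeas
  refine ⟨⟨hAtop, ?_⟩, hAne, ?_⟩
  · intro t ht
    rcases hs with rfl | ⟨r, hr, rfl⟩
    · have : A ∩ {ω | τ ω ≤ (t : WithTop ℝ)} = ∅ := by
        ext ω; simp only [Set.mem_inter_iff, Set.mem_setOf_eq, Set.mem_empty_iff_false,
          iff_false, not_and]
        intro hω hle
        have := hAsub hω
        simp only [Set.mem_setOf_eq] at this
        rw [this] at hle
        simp at hle
      rw [this]; exact @MeasurableSet.empty _ (𝓕 _)
    · by_cases hrt : r ≤ t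
      · have : A ∩ {ω | τ ω ≤ (t : WithTop ℝ)} = A := by
          apply Set.inter_eq_self_of_subset_left
          intro ω hω
          have := hAsub hω
          simp only [Set.mem_setOf_eq] at this ⊢
          rw [this]; exact_mod_cast hrt
        rw [this]; exact hmono r hr t ht (by exact_mod_cast hrt) _ hAmeas
      · have : A ∩ {ω | τ ω ≤ (t : WithTop ℝ)} = ∅ := by
          ext ω; simp only [Set.mem_inter_iff, Set.mem_setOf_eq, Set.mem_empty_iff_false,
            iff_false, not_and]
          intro hω hle
          have := hAsub hω
          simp only [Set.mem_setOf_eq] at this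
          rw [this] at hle
          exact hrt (by exact_mod_cast hle)
        rw [this]; exact @MeasurableSet.empty _ (𝓕 _)
  · rintro F ⟨hFtop, hFt⟩ hFA
    rcases hs with rfl | ⟨r, hr, rfl⟩
    · exact hAatom F hFtop hFA
    · have hFeq : F ∩ {ω | τ ω ≤ (r : WithTop ℝ)} = F := by
        apply Set.inter_eq_self_of_subset_left
        intro ω hω
        have := hAsub (hFA hω)
        simp only [Set.mem_setOf_eq] at this ⊢
        rw [this]
      have := hFt r hr
      rw [hFeq] at this
      exact hAatom F this hFA
end

section
/- Let τ be a stopping time on a filtered probability space with |F_∞| < ∞. With A_τ^t = {A ∈ A(F_t) : A ⊆ {τ = t}} and A_τ = ⋃_{t∈T∪{+∞}} A_τ^t, the collection A_τ is exactly the set of atoms of F_τ: A_τ = A(F_τ). -/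
/-!
On a level set `{τ = s}` the stopping-time σ-algebra `F_τ` traces exactly `F_s`, so an atom
of `F_s` inside `{τ = s}` is an atom of `F_τ`. Conversely, each `{τ ≤ t}` lies in `F_τ`, so an
atom of `F_τ` is either contained in or disjoint from it; hence `τ` is constant on the atom,
which then sits inside a level set and is an atom of the corresponding `F_s`.
-/

open Set MeasurableSpace MeasureTheory

def IsAtomIn {Ω : Type*} (C : Set (Set Ω)) (A : Set Ω) : Prop :=
  A ∈ C ∧ A ≠ ∅ ∧ ∀ F ∈ C, F ⊆ A → F = ∅ ∨ F = A

theorem isAtomIn_iff_of_forall_subset {Ω : Type*} {C D : Set (Set Ω)} {A : Set Ω}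
    (h : ∀ F ⊆ A, F ∈ C ↔ F ∈ D) : IsAtomIn C A ↔ IsAtomIn D A := by
  refine ⟨fun ⟨hA, hne, hmin⟩ => ?_, fun ⟨hA, hne, hmin⟩ => ?_⟩
  · exact ⟨(h A subset_rfl).1 hA, hne, fun F hF hFA => hmin F ((h F hFA).2 hF) hFA⟩
  · exact ⟨(h A subset_rfl).2 hA, hne, fun F hF hFA => hmin F ((h F hFA).1 hF) hFA⟩

theorem IsAtomIn.mem_of_inter_mem {Ω : Type*} {C : Set (Set Ω)} {A B : Set Ω}
    (hA : IsAtomIn C A) (hAB : A ∩ B ∈ C) {ω ω' : Ω} (hω : ω ∈ A ∩ B) (hω' : ω' ∈ A) :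
    ω' ∈ B := by
  rcases hA.2.2 _ hAB inter_subset_left with h | h
  · exact absurd (h ▸ hω) (notMem_empty ω)
  · exact (h.symm ▸ hω' : ω' ∈ A ∩ B).2

theorem eq_of_forall_le_iff_of_eq_top_or_mem_image {α β : Type*} [PartialOrder α] [OrderTop α]
    {f : β → α} {T : Set β} {x y : α} (hx : x = ⊤ ∨ ∃ r ∈ T, x = f r)
    (hy : y = ⊤ ∨ ∃ r ∈ T, y = f r) (h : ∀ r ∈ T, x ≤ f r ↔ y ≤ f r) : x = y := by
  have le_of_forall {a b : α} (ha : a = ⊤ ∨ ∃ r ∈ T, a = f r)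
      (hab : ∀ r ∈ T, a ≤ f r → b ≤ f r) : b ≤ a := by
    rcases ha with rfl | ⟨r, hr, rfl⟩
    exacts [le_top, hab r hr le_rfl]
  exact le_antisymm (le_of_forall hy fun r hr => (h r hr).2)
    (le_of_forall hx fun r hr => (h r hr).1)

section StoppedSets

variable {Ω : Type*} {T : Set ℝ} {𝓕 : WithTop ℝ → MeasurableSpace Ω} {τ : Ω → WithTop ℝ}

theorem mem_stoppedSets_of_subset_levelSet {s : WithTop ℝ} (h_top : 𝓕 s ≤ 𝓕 ⊤)
    (h_mono : ∀ t ∈ T, s ≤ t → 𝓕 s ≤ 𝓕 t) {F : Set Ω} (hF : MeasurableSet[𝓕 s] F)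
    (hFs : F ⊆ {ω | τ ω = s}) : F ∈ stoppedSets T 𝓕 τ := by
  refine ⟨h_top _ hF, fun t ht => ?_⟩
  by_cases hst : s ≤ t
  · have hinter : F ∩ {ω | τ ω ≤ t} = F :=
      inter_eq_left.2 fun ω hω => (hFs hω).trans_le hst
    rw [hinter]
    exact h_mono t ht hst _ hF
  · have hinter : F ∩ {ω | τ ω ≤ t} = ∅ :=
      eq_empty_of_forall_notMem fun ω ⟨hω, hle⟩ => hst ((hFs hω).symm.trans_le hle)
    exact hinter ▸ @MeasurableSet.empty Ω (𝓕 t)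

theorem measurableSet_of_mem_stoppedSets_of_subset_levelSet {s : WithTop ℝ}
    (hs : s = ⊤ ∨ ∃ r ∈ T, s = (r : WithTop ℝ)) {F : Set Ω} (hF : F ∈ stoppedSets T 𝓕 τ)
    (hFs : F ⊆ {ω | τ ω = s}) : MeasurableSet[𝓕 s] F := by
  rcases hs with rfl | ⟨r, hr, rfl⟩
  · exact hF.1
  · have hinter : F ∩ {ω | τ ω ≤ r} = F := inter_eq_left.2 fun ω hω => (hFs hω).le
    exact hinter ▸ hF.2 r hr

variable (hmono : ∀ s ∈ T, ∀ t ∈ T, s ≤ t → 𝓕 s ≤ 𝓕 t)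
  (hsub : ∀ t ∈ T, 𝓕 (t : WithTop ℝ) ≤ 𝓕 ⊤)
include hmono hsub

theorem mem_stoppedSets_iff_of_subset_levelSet {s : WithTop ℝ}
    (hs : s = ⊤ ∨ ∃ r ∈ T, s = (r : WithTop ℝ)) {F : Set Ω} (hFs : F ⊆ {ω | τ ω = s}) :
    F ∈ stoppedSets T 𝓕 τ ↔ MeasurableSet[𝓕 s] F := by
  refine ⟨fun hF => measurableSet_of_mem_stoppedSets_of_subset_levelSet hs hF hFs,
    fun hF => ?_⟩
  rcases hs with rfl | ⟨r, hr, rfl⟩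
  · exact mem_stoppedSets_of_subset_levelSet le_rfl (fun t _ h => absurd h (by simp)) hF hFs
  · exact mem_stoppedSets_of_subset_levelSet (hsub r hr)
      (fun t ht h => hmono r hr t ht (WithTop.coe_le_coe.1 h)) hF hFs

theorem isAtomOf_iff_isAtomIn_stoppedSets {s : WithTop ℝ}
    (hs : s = ⊤ ∨ ∃ r ∈ T, s = (r : WithTop ℝ)) {A : Set Ω} (hAs : A ⊆ {ω | τ ω = s}) :
    IsAtomOf (𝓕 s) A ↔ IsAtomIn (stoppedSets T 𝓕 τ) A :=
  isAtomIn_iff_of_forall_subset fun _ hFA =>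
    (mem_stoppedSets_iff_of_subset_levelSet hmono hsub hs (hFA.trans hAs)).symm

theorem inter_le_mem_stoppedSets
    (hstop : ∀ t ∈ T, MeasurableSet[𝓕 (t : WithTop ℝ)] {ω | τ ω ≤ (t : WithTop ℝ)})
    {F : Set Ω} (hF : F ∈ stoppedSets T 𝓕 τ) {t : ℝ} (ht : t ∈ T) :
    F ∩ {ω | τ ω ≤ t} ∈ stoppedSets T 𝓕 τ := by
  refine ⟨hF.1.inter (hsub t ht _ (hstop t ht)), fun t' ht' => ?_⟩
  rcases le_total t t' with h | h
  · have hinter : F ∩ {ω | τ ω ≤ t} ∩ {ω | τ ω ≤ t'} = F ∩ {ω | τ ω ≤ t} :=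
      inter_eq_left.2 fun ω hω => hω.2.trans (WithTop.coe_le_coe.2 h)
    rw [hinter]
    exact hmono t ht t' ht' h _ (hF.2 t ht)
  · have hinter : F ∩ {ω | τ ω ≤ t} ∩ {ω | τ ω ≤ t'} = F ∩ {ω | τ ω ≤ t'} := by
      ext ω
      exact ⟨fun ⟨⟨hF, _⟩, h'⟩ => ⟨hF, h'⟩,
        fun ⟨hF, h'⟩ => ⟨⟨hF, h'.trans (WithTop.coe_le_coe.2 h)⟩, h'⟩⟩
    exact hinter ▸ hF.2 t' ht'

theorem IsAtomIn.stoppingTime_eq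
    (hstop : ∀ t ∈ T, MeasurableSet[𝓕 (t : WithTop ℝ)] {ω | τ ω ≤ (t : WithTop ℝ)})
    (hrange : ∀ ω, τ ω = ⊤ ∨ ∃ t ∈ T, τ ω = (t : WithTop ℝ))
    {A : Set Ω} (hA : IsAtomIn (stoppedSets T 𝓕 τ) A) {ω ω' : Ω} (hω : ω ∈ A) (hω' : ω' ∈ A) :
    τ ω = τ ω' := by
  have hle_of_le {a b : Ω} (ha : a ∈ A) (hb : b ∈ A) {t : ℝ} (ht : t ∈ T) (hat : τ a ≤ t) :
      τ b ≤ t :=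
    hA.mem_of_inter_mem (inter_le_mem_stoppedSets hmono hsub hstop hA.1 ht) ⟨ha, hat⟩ hb
  exact eq_of_forall_le_iff_of_eq_top_or_mem_image (hrange ω) (hrange ω') fun t ht =>
    ⟨hle_of_le hω hω' ht, hle_of_le hω' hω ht⟩

end StoppedSets

theorem Atau_eq_atoms_stoppedSets_general {Ω : Type*} (T : Set ℝ)
    (𝓕 : WithTop ℝ → MeasurableSpace Ω) (τ : Ω → WithTop ℝ)
    (hmono : ∀ s ∈ T, ∀ t ∈ T, s ≤ t → 𝓕 s ≤ 𝓕 t)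
    (hsub : ∀ t ∈ T, 𝓕 (t : WithTop ℝ) ≤ 𝓕 ⊤)
    (hrange : ∀ ω, τ ω = ⊤ ∨ ∃ t ∈ T, τ ω = (t : WithTop ℝ))
    (hstop : ∀ t ∈ T, MeasurableSet[𝓕 (t : WithTop ℝ)] {ω | τ ω ≤ (t : WithTop ℝ)}) :
    {A : Set Ω | ∃ s : WithTop ℝ, (s = ⊤ ∨ ∃ r ∈ T, s = (r : WithTop ℝ)) ∧
        IsAtomOf (𝓕 s) A ∧ A ⊆ {ω | τ ω = s}} =
    {A : Set Ω | A ∈ stoppedSets T 𝓕 τ ∧ A ≠ ∅ ∧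
        ∀ F ∈ stoppedSets T 𝓕 τ, F ⊆ A → F = ∅ ∨ F = A} := by
  ext A
  constructor
  · rintro ⟨s, hs, hA, hAs⟩
    exact (isAtomOf_iff_isAtomIn_stoppedSets hmono hsub hs hAs).1 hA
  · intro (hA : IsAtomIn (stoppedSets T 𝓕 τ) A)
    obtain ⟨ω₀, hω₀⟩ := nonempty_iff_ne_empty.2 hA.2.1
    have hAs : A ⊆ {ω | τ ω = τ ω₀} := fun ω hω =>
      hA.stoppingTime_eq hmono hsub hstop hrange hω hω₀
    exact ⟨τ ω₀, hrange ω₀, (isAtomOf_iff_isAtomIn_stoppedSets hmono hsub (hrange ω₀) hAs).2 hA,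
      hAs⟩

/-- for finite F_infinity, A_tau is exactly the set of atoms of F_tau. -/
theorem Atau_eq_atoms_stoppedSets {Ω : Type*} (T : Set ℝ)
    (𝓕 : WithTop ℝ → MeasurableSpace Ω) (τ : Ω → WithTop ℝ)
    (hmono : ∀ s ∈ T, ∀ t ∈ T, s ≤ t → 𝓕 s ≤ 𝓕 t)
    (hsub : ∀ t ∈ T, 𝓕 (t : WithTop ℝ) ≤ 𝓕 ⊤)
    (hfin : {S : Set Ω | MeasurableSet[𝓕 ⊤] S}.Finite)
    (hrange : ∀ ω, τ ω = ⊤ ∨ ∃ t ∈ T, τ ω = (t : WithTop ℝ))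
    (hstop : ∀ t ∈ T, MeasurableSet[𝓕 (t : WithTop ℝ)] {ω | τ ω ≤ (t : WithTop ℝ)}) :
    {A : Set Ω | ∃ s : WithTop ℝ, (s = ⊤ ∨ ∃ r ∈ T, s = (r : WithTop ℝ)) ∧
        IsAtomOf (𝓕 s) A ∧ A ⊆ {ω | τ ω = s}} =
    {A : Set Ω | A ∈ stoppedSets T 𝓕 τ ∧ A ≠ ∅ ∧
        ∀ F ∈ stoppedSets T 𝓕 τ, F ⊆ A → F = ∅ ∨ F = A} :=
  Atau_eq_atoms_stoppedSets_general T 𝓕 τ hmono hsub hrange hstop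
end

section
/- Let τ be a stopping time with |F_∞| < ∞. Then F_τ = σ(A_τ), i.e., the stopping time σ-algebra is generated by the collection A_τ = ⋃_{t∈T∪{+∞}} {A atom of F_t : A ⊆ {τ = t}}. -/
open Set MeasurableSpace MeasureTheory

section aux
variable {Ω : Type*}

lemma finite_sUnion' {m : MeasurableSpace Ω} (hfin : {S : Set Ω | MeasurableSet[m] S}.Finite)
    (C : Set (Set Ω)) (h : ∀ A ∈ C, MeasurableSet[m] A) : MeasurableSet[m] (⋃₀ C) :=
  MeasurableSet.sUnion (hfin.subset h).countable h

def atomOf (m : MeasurableSpace Ω) (ω : Ω) : Set Ω := ⋂₀ {B | MeasurableSet[m] B ∧ ω ∈ B}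

lemma mem_atomOf (m : MeasurableSpace Ω) (ω : Ω) : ω ∈ atomOf m ω := fun _ hB => hB.2

lemma atomOf_subset {m : MeasurableSpace Ω} {ω : Ω} {B : Set Ω}
    (hB : MeasurableSet[m] B) (hω : ω ∈ B) : atomOf m ω ⊆ B :=
  sInter_subset_of_mem ⟨hB, hω⟩

lemma measurable_atomOf {m : MeasurableSpace Ω}
    (hfin : {S : Set Ω | MeasurableSet[m] S}.Finite) (ω : Ω) :
    MeasurableSet[m] (atomOf m ω) :=
  MeasurableSet.sInter ((hfin.subset (fun _ hB => hB.1)).countable) (fun _ hB => hB.1)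

lemma isAtomOf_atomOf {m : MeasurableSpace Ω}
    (hfin : {S : Set Ω | MeasurableSet[m] S}.Finite) (ω : Ω) :
    IsAtomOf m (atomOf m ω) := by
  refine ⟨measurable_atomOf hfin ω, ?_, ?_⟩
  · exact fun h => (h ▸ mem_atomOf m ω : ω ∈ (∅ : Set Ω))
  · intro F hF hFA
    by_cases hω : ω ∈ F
    · exact Or.inr (le_antisymm hFA (atomOf_subset hF hω))
    · left
      have : atomOf m ω ⊆ Fᶜ := atomOf_subset hF.compl hω
      exact eq_empty_of_subset_empty (fun x hx => (this (hFA hx)) hx)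

end aux

/-- for finite F_infinity, F_tau is generated by the collection A_tau. -/
theorem stoppedSets_eq_generateFrom_Atau {Ω : Type*} (T : Set ℝ)
    (𝓕 : WithTop ℝ → MeasurableSpace Ω) (τ : Ω → WithTop ℝ)
    (hmono : ∀ s ∈ T, ∀ t ∈ T, s ≤ t → 𝓕 s ≤ 𝓕 t)
    (hsub : ∀ t ∈ T, 𝓕 (t : WithTop ℝ) ≤ 𝓕 ⊤)
    (hfin : {S : Set Ω | MeasurableSet[𝓕 ⊤] S}.Finite)
    (hrange : ∀ ω, τ ω = ⊤ ∨ ∃ t ∈ T, τ ω = (t : WithTop ℝ))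
    (hstop : ∀ t ∈ T, MeasurableSet[𝓕 (t : WithTop ℝ)] {ω | τ ω ≤ (t : WithTop ℝ)}) :
    ∀ S : Set Ω, S ∈ stoppedSets T 𝓕 τ ↔
      MeasurableSet[MeasurableSpace.generateFrom
        {A : Set Ω | ∃ s : WithTop ℝ, (s = ⊤ ∨ ∃ r ∈ T, s = (r : WithTop ℝ)) ∧
          IsAtomOf (𝓕 s) A ∧ A ⊆ {ω | τ ω = s}}] S := by
  set gens : Set (Set Ω) :=
    {A : Set Ω | ∃ s : WithTop ℝ, (s = ⊤ ∨ ∃ r ∈ T, s = (r : WithTop ℝ)) ∧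
      IsAtomOf (𝓕 s) A ∧ A ⊆ {ω | τ ω = s}} with hgens
  -- finiteness at each level
  have hfin' : ∀ s : WithTop ℝ, (s = ⊤ ∨ ∃ r ∈ T, s = (r : WithTop ℝ)) →
      {S : Set Ω | MeasurableSet[𝓕 s] S}.Finite := by
    rintro s (rfl | ⟨r, hr, rfl⟩)
    · exact hfin
    · exact hfin.subset (fun B hB => hsub r hr B hB)
  have hle_top : ∀ s : WithTop ℝ, (s = ⊤ ∨ ∃ r ∈ T, s = (r : WithTop ℝ)) → 𝓕 s ≤ 𝓕 ⊤ := by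
    rintro s (rfl | ⟨r, hr, rfl⟩)
    · exact le_rfl
    · exact hsub r hr
  intro S
  constructor
  · -- forward direction: decompose into atoms
    intro hS
    -- key: S ∩ {τ = τ ω} is measurable in 𝓕 (τ ω) for ω ∈ S
    have hFs : ∀ ω ∈ S, MeasurableSet[𝓕 (τ ω)] (S ∩ {x | τ x = τ ω}) := by
      intro ω hω
      rcases hrange ω with hωT | ⟨t, ht, hωT⟩
      · rw [hωT]
        have hU : MeasurableSet[𝓕 ⊤]
            (⋃₀ ((fun t : ℝ => {x | τ x ≤ (t : WithTop ℝ)}) '' T)) := by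
          apply finite_sUnion' hfin
          rintro B ⟨t, ht, rfl⟩
          exact hsub t ht _ (hstop t ht)
        have heq : {x | τ x = (⊤ : WithTop ℝ)} =
            (⋃₀ ((fun t : ℝ => {x | τ x ≤ (t : WithTop ℝ)}) '' T))ᶜ := by
          ext x
          simp only [mem_setOf_eq, mem_compl_iff, mem_sUnion, mem_image]
          constructor
          · rintro hx ⟨B, ⟨t, ht, rfl⟩, hxB⟩
            simp only [mem_setOf_eq, hx] at hxB
            simp at hxB
          · intro hx
            rcases hrange x with h | ⟨t, ht, h⟩
            · exact h
            · exact absurd ⟨_, ⟨t, ht, rfl⟩, by simp [h]⟩ hx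
        rw [heq]
        exact hS.1.inter hU.compl
      · rw [hωT]
        set U := ⋃₀ ((fun r : ℝ => {x | τ x ≤ (r : WithTop ℝ)}) '' {r ∈ T | r < t}) with hUdef
        have hU : MeasurableSet[𝓕 (t : WithTop ℝ)] U := by
          apply finite_sUnion' (hfin' _ (Or.inr ⟨t, ht, rfl⟩))
          rintro B ⟨r, ⟨hr, hrt⟩, rfl⟩
          exact hmono r hr t ht hrt.le _ (hstop r hr)
        have heq : S ∩ {x | τ x = (t : WithTop ℝ)} =
            (S ∩ {x | τ x ≤ (t : WithTop ℝ)}) ∩ Uᶜ := by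
          ext x
          simp only [hUdef, mem_inter_iff, mem_setOf_eq, mem_compl_iff, mem_sUnion, mem_image]
          constructor
          · rintro ⟨hxS, hxt⟩
            refine ⟨⟨hxS, hxt.le⟩, ?_⟩
            rintro ⟨B, ⟨r, ⟨hr, hrt⟩, rfl⟩, hxB⟩
            simp only [mem_setOf_eq, hxt] at hxB
            exact absurd (lt_of_le_of_lt hxB (by exact_mod_cast hrt)) (lt_irrefl _)
          · rintro ⟨⟨hxS, hxt⟩, hxU⟩
            refine ⟨hxS, ?_⟩
            rcases hrange x with h | ⟨r, hr, h⟩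
            · rw [h] at hxt; simp at hxt
            · rw [h] at hxt ⊢
              norm_cast at hxt ⊢
              rcases lt_or_eq_of_le hxt with hlt | hle
              · exact absurd ⟨_, ⟨r, ⟨hr, hlt⟩, rfl⟩, by simp [h]⟩ hxU
              · exact hle
        rw [heq]
        exact (hS.2 t ht).inter hU.compl
    -- each atom is a generator
    have hA : ∀ ω ∈ S, atomOf (𝓕 (τ ω)) ω ∈ gens := by
      intro ω hω
      refine ⟨τ ω, hrange ω, isAtomOf_atomOf (hfin' _ (hrange ω)) ω, ?_⟩
      intro x hx
      exact (atomOf_subset (hFs ω hω) ⟨hω, rfl⟩ hx).2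
    -- S is the union of the atoms of its points
    have hSeq : S = ⋃₀ ((fun ω => atomOf (𝓕 (τ ω)) ω) '' S) := by
      apply Set.Subset.antisymm
      · intro ω hω
        exact ⟨_, ⟨ω, hω, rfl⟩, mem_atomOf _ ω⟩
      · rintro x ⟨B, ⟨ω, hω, rfl⟩, hx⟩
        exact (atomOf_subset (hFs ω hω) ⟨hω, rfl⟩ hx).1
    rw [hSeq]
    have hcnt : ((fun ω => atomOf (𝓕 (τ ω)) ω) '' S).Countable := by
      apply Set.Countable.mono _ hfin.countable
      rintro B ⟨ω, hω, rfl⟩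
      exact hle_top _ (hrange ω) _ (measurable_atomOf (hfin' _ (hrange ω)) ω)
    apply MeasurableSet.sUnion hcnt
    rintro B ⟨ω, hω, rfl⟩
    exact measurableSet_generateFrom (hA ω hω)
  · -- backward direction
    intro hS
    have hm' : ∃ m' : MeasurableSpace Ω, ∀ B : Set Ω,
        MeasurableSet[m'] B ↔ B ∈ stoppedSets T 𝓕 τ := by
      refine ⟨{ MeasurableSet' := fun B => B ∈ stoppedSets T 𝓕 τ
                measurableSet_empty := ⟨(𝓕 ⊤).measurableSet_empty, fun t ht => by
                  simp only [Set.empty_inter]; exact (𝓕 (t:WithTop ℝ)).measurableSet_empty⟩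
                measurableSet_compl := fun B hB => ⟨hB.1.compl, fun t ht => by
                  have : Bᶜ ∩ {ω | τ ω ≤ (t:WithTop ℝ)} =
                      {ω | τ ω ≤ (t:WithTop ℝ)} \ (B ∩ {ω | τ ω ≤ (t:WithTop ℝ)}) := by
                    ext x; simp only [mem_inter_iff, mem_compl_iff, mem_diff, mem_setOf_eq]; tauto
                  rw [this]
                  exact (hstop t ht).diff (hB.2 t ht)⟩
                measurableSet_iUnion := fun f hf =>
                  ⟨MeasurableSet.iUnion (fun i => (hf i).1), fun t ht => by
                    rw [Set.iUnion_inter]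
                    exact MeasurableSet.iUnion (fun i => (hf i).2 t ht)⟩ }, fun B => Iff.rfl⟩
    obtain ⟨m', hm'⟩ := hm'
    have hle : MeasurableSpace.generateFrom gens ≤ m' := by
      apply MeasurableSpace.generateFrom_le
      rintro A ⟨s, hs, hatom, hAsub⟩
      rw [hm']
      refine ⟨hle_top s hs _ hatom.1, ?_⟩
      intro t ht
      rcases hs with rfl | ⟨r, hr, rfl⟩
      · have : A ∩ {ω | τ ω ≤ (t : WithTop ℝ)} = ∅ := by
          apply eq_empty_of_subset_empty
          rintro x ⟨hxA, hxt⟩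
          have := hAsub hxA
          simp only [mem_setOf_eq] at this hxt
          rw [this] at hxt
          simp at hxt
        rw [this]; exact (𝓕 (t:WithTop ℝ)).measurableSet_empty
      · by_cases hrt : r ≤ t
        · have : A ∩ {ω | τ ω ≤ (t : WithTop ℝ)} = A := by
            apply Set.inter_eq_left.mpr
            intro x hx
            have := hAsub hx
            simp only [mem_setOf_eq] at this ⊢
            rw [this]
            exact_mod_cast hrt
          rw [this]
          exact hmono r hr t ht hrt _ hatom.1
        · have : A ∩ {ω | τ ω ≤ (t : WithTop ℝ)} = ∅ := by
            apply eq_empty_of_subset_empty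
            rintro x ⟨hxA, hxt⟩
            have := hAsub hxA
            simp only [mem_setOf_eq] at this hxt
            rw [this] at hxt
            exact hrt (by exact_mod_cast hxt)
          rw [this]; exact (𝓕 (t:WithTop ℝ)).measurableSet_empty
    rw [← hm']
    exact hle S hS
end
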